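/- If ∇V is Lipschitz with constant L, τ_k is a step size, u^{k+1} is produced from u^k by one step of a discrete gradient scheme (so V(u^k) - V(u^{k+1}) = (1/τ_k)‖u^{k+1} - u^k‖²), and the curvature (Wolfe-type) condition ⟨∇V(u^{k+1}), u^{k+1} - u^k⟩ ≥ c₂⟨∇V(u^k), u^{k+1} - u^k⟩ holds for some c₂ ∈ (0,1), then, provided u^{k+1} ≠ u^k, the step size satisfies the lower bound τ_k ≥ (2/L)·(1 - c₂)/(1 + c₂). -/

import Mathlib

open scoped InnerProductSpace

/-- Descent lemma: if the gradient of `V` is `L`-Lipschitz, then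
`V u ≤ V v + ⟪∇V v, u - v⟫ + (L/2)‖u - v‖²`. -/
lemma descent_lemma_aux {n : ℕ} (V : EuclideanSpace ℝ (Fin n) → ℝ) (hV : ContDiff ℝ 1 V)
    (L : ℝ) (hL0 : 0 < L)
    (hL : ∀ x y, ‖gradient V x - gradient V y‖ ≤ L * ‖x - y‖)
    (v u : EuclideanSpace ℝ (Fin n)) :
    V u ≤ V v + ⟪gradient V v, u - v⟫_ℝ + L / 2 * ‖u - v‖ ^ 2 := by
  set d : EuclideanSpace ℝ (Fin n) := u - v with hd
  have hdiffV : Differentiable ℝ V := hV.differentiable one_ne_zero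
  set φ : ℝ → ℝ := fun t => V (v + t • d) - t * ⟪gradient V v, d⟫_ℝ - L / 2 * t ^ 2 * ‖d‖ ^ 2
    with hφ
  have hderiv : ∀ t : ℝ, HasDerivAt φ
      (⟪gradient V (v + t • d), d⟫_ℝ - ⟪gradient V v, d⟫_ℝ - L / 2 * (2 * t) * ‖d‖ ^ 2) t := by
    intro t
    have hline : HasDerivAt (fun t : ℝ => v + t • d) d t := by
      simpa using ((hasDerivAt_id t).smul_const d).const_add v
    have hg : HasFDerivAt V (InnerProductSpace.toDual ℝ _ (gradient V (v + t • d)))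
        (v + t • d) := (hdiffV (v + t • d)).hasGradientAt
    have h1 : HasDerivAt (fun t : ℝ => V (v + t • d)) ⟪gradient V (v + t • d), d⟫_ℝ t := by
      simpa [InnerProductSpace.toDual_apply_apply, Function.comp_def] using hg.comp_hasDerivAt t hline
    have h2 : HasDerivAt (fun t : ℝ => t * ⟪gradient V v, d⟫_ℝ) ⟪gradient V v, d⟫_ℝ t := by
      simpa using (hasDerivAt_id t).mul_const ⟪gradient V v, d⟫_ℝ
    have h3 : HasDerivAt (fun t : ℝ => L / 2 * t ^ 2 * ‖d‖ ^ 2)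
        (L / 2 * (2 * t) * ‖d‖ ^ 2) t := by
      have := ((hasDerivAt_pow 2 t).const_mul (L / 2)).mul_const (‖d‖ ^ 2)
      simpa [mul_comm, mul_assoc, mul_left_comm] using this
    exact (h1.sub h2).sub h3
  have hanti : AntitoneOn φ (Set.Icc (0 : ℝ) 1) := by
    apply antitoneOn_of_deriv_nonpos (convex_Icc 0 1)
    · exact fun t _ => ((hderiv t).continuousAt).continuousWithinAt
    · intro t ht
      exact ((hderiv t).differentiableAt).differentiableWithinAt
    · intro t ht
      rw [interior_Icc] at ht
      rw [(hderiv t).deriv]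
      have hcs : ⟪gradient V (v + t • d) - gradient V v, d⟫_ℝ ≤
          ‖gradient V (v + t • d) - gradient V v‖ * ‖d‖ := real_inner_le_norm _ _
      have hlip : ‖gradient V (v + t • d) - gradient V v‖ ≤ L * (t * ‖d‖) := by
        have := hL (v + t • d) v
        simpa [norm_smul, abs_of_pos ht.1] using this
      have : ⟪gradient V (v + t • d), d⟫_ℝ - ⟪gradient V v, d⟫_ℝ ≤ L * t * ‖d‖ ^ 2 := by
        rw [← inner_sub_left]
        calc ⟪gradient V (v + t • d) - gradient V v, d⟫_ℝ
            ≤ ‖gradient V (v + t • d) - gradient V v‖ * ‖d‖ := hcs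
          _ ≤ L * (t * ‖d‖) * ‖d‖ := by
              apply mul_le_mul_of_nonneg_right hlip (norm_nonneg _)
          _ = L * t * ‖d‖ ^ 2 := by ring
      nlinarith [this]
  have h01 : φ 1 ≤ φ 0 := hanti (by norm_num) (by norm_num) (by norm_num)
  have he0 : φ 0 = V v := by simp [hφ]
  have he1 : φ 1 = V u - ⟪gradient V v, d⟫_ℝ - L / 2 * ‖d‖ ^ 2 := by
    simp [hφ, hd]
  rw [he0, he1] at h01
  linarith

theorem stmt_4 {n : ℕ} (V : EuclideanSpace ℝ (Fin n) → ℝ) (hV : ContDiff ℝ 1 V)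
    (L : ℝ) (hL0 : 0 < L)
    (hL : ∀ x y, ‖gradient V x - gradient V y‖ ≤ L * ‖x - y‖)
    (c₂ : ℝ) (hc₂ : c₂ ∈ Set.Ioo (0 : ℝ) 1)
    (τ : ℝ) (hτ : 0 < τ) (uk uk1 : EuclideanSpace ℝ (Fin n))
    (hne : uk1 ≠ uk)
    (hdis : τ * (V uk - V uk1) = ‖uk1 - uk‖ ^ 2)
    (hcurv : ⟪gradient V uk1, uk1 - uk⟫_ℝ ≥ c₂ * ⟪gradient V uk, uk1 - uk⟫_ℝ) :
    τ ≥ (2 / L) * ((1 - c₂) / (1 + c₂)) := by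
  obtain ⟨hc0, hc1⟩ := hc₂
  set h : ℝ := ‖uk1 - uk‖ ^ 2 with hh'
  have hh : 0 < h := by
    rw [hh']
    exact pow_pos (norm_sub_pos_iff.mpr hne) 2
  set D : ℝ := V uk - V uk1 with hD
  set A : ℝ := ⟪gradient V uk, uk1 - uk⟫_ℝ with hA
  set B : ℝ := ⟪gradient V uk1, uk1 - uk⟫_ℝ with hB
  -- descent with v = uk, u = uk1 :
  have d1 : V uk1 ≤ V uk + A + L / 2 * h := descent_lemma_aux V hV L hL0 hL uk uk1
  -- descent with v = uk1, u = uk :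
  have d2 : V uk ≤ V uk1 - B + L / 2 * h := by
    have := descent_lemma_aux V hV L hL0 hL uk1 uk
    have hrw : ⟪gradient V uk1, uk - uk1⟫_ℝ = -B := by
      rw [hB, ← inner_neg_right]
      congr 1
      abel
    rw [hrw] at this
    have hn : ‖uk - uk1‖ ^ 2 = h := by rw [hh', ← norm_neg]; congr 1; abel
    rw [hn] at this
    linarith
  have hA1 : -D - L / 2 * h ≤ A := by linarith
  have hB1 : B ≤ -D + L / 2 * h := by linarith
  have key : c₂ * (-D - L / 2 * h) ≤ -D + L / 2 * h := by
    calc c₂ * (-D - L / 2 * h) ≤ c₂ * A := by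
          apply mul_le_mul_of_nonneg_left hA1 hc0.le
      _ ≤ B := hcurv
      _ ≤ -D + L / 2 * h := hB1
  -- so (1 - c₂) * D ≤ L/2 * (1 + c₂) * h ; with τ * D = h this gives the bound
  rw [ge_iff_le, div_mul_div_comm, div_le_iff₀ (by nlinarith : (0 : ℝ) < L * (1 + c₂))]
  -- goal : 2 * (1 - c₂) ≤ τ * (L * (1 + c₂))
  have hkey2 : (1 - c₂) * D ≤ L / 2 * (1 + c₂) * h := by nlinarith
  have hmul : (1 - c₂) * h ≤ L / 2 * (1 + c₂) * h * τ := by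
    have := mul_le_mul_of_nonneg_right hkey2 hτ.le
    calc (1 - c₂) * h = (1 - c₂) * D * τ := by rw [← hdis]; ring
      _ ≤ L / 2 * (1 + c₂) * h * τ := by nlinarith
  nlinarith [hmul, hh]
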